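/- arXiv:1611.02589 — 3 statements merged into one kernel-verified Lean document; each statement's English description precedes it below -/
import Mathlib

section
/- There exists a constant C such that for every n ≥ 4 there exist a natural number N ≤ C · n · (log₂ n)³ · (log₂ log₂ n)^C and a partial order ⊑ on Fin N such that every tree order with at most n elements embeds into (Fin N, ⊑) as an induced suborder. (Equivalently: there is a consistent ancestry-labeling scheme for n-node forests with labels of log₂ n + 3 log₂ log₂ n + O(log₂ log₂ log₂ n) bits.) -/
/-!
Label each element by an interval `[b - l, b)` so that strict ancestry gives strict containment
and incomparable elements get disjoint intervals; the order is then interval inclusion. To keep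
the label set small, an interval of length `l` must end at a multiple of `2 ^ (⌈log₂ l⌉ - k)`,
where `2 ^ k ≈ 4 log₂ n`: per dyadic length scale there are then `O(n 2 ^ k)` labels,
`O(n log² n)` in all.

A subtree of size `s` gets an interval of length `s + 4 s ⌈log₂ s⌉ / 2 ^ k ≤ 2 s`. Below the root,
the largest child subtree is placed flush with the right end and every other one after rounding its
right end down to its alignment, which wastes at most `4 c / 2 ^ k` for a subtree of size `c`. As in
heavy-path decomposition, an element lies in a non-largest subtree at most `log₂ n` times, so the
waste stays within the budget.
-/

/-- A partial order is a *tree order* if any two incomparable elements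
have no common upper bound. -/
def IsTreeOrder (X : Type*) [PartialOrder X] : Prop :=
  ∀ x y z : X, x ≤ y → x ≤ z → (y ≤ z ∨ z ≤ y)

namespace AncestryLabeling

open Finset

lemma pow_clog_le_two_mul {x : ℕ} (hx : 1 ≤ x) : 2 ^ Nat.clog 2 x ≤ 2 * x := by
  rcases hx.eq_or_lt with rfl | hx
  · simp
  · have hlt : 2 ^ (Nat.clog 2 x - 1) < x := Nat.pow_pred_clog_lt_self one_lt_two hx
    have hpos := Nat.clog_pos one_lt_two hx
    calc 2 ^ Nat.clog 2 x = 2 * 2 ^ (Nat.clog 2 x - 1) := by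
          rw [← pow_succ', Nat.sub_add_cancel hpos]
      _ ≤ 2 * x := by omega

lemma clog_div_two_add_one_le {s : ℕ} (hs : 2 ≤ s) : Nat.clog 2 (s / 2) + 1 ≤ Nat.clog 2 s := by
  rw [Nat.clog_of_two_le one_lt_two hs]
  exact Nat.add_le_add_right (Nat.clog_mono_right _ (by omega)) 1

lemma mod_pow_clog_sub_le (β k m : ℕ) : β % 2 ^ (Nat.clog 2 m - k) ≤ 2 * m / 2 ^ k := by
  rcases Nat.eq_zero_or_pos (Nat.clog 2 m - k) with h | h
  · rw [h, pow_zero, Nat.mod_one]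
    exact Nat.zero_le _
  · have hm : 1 ≤ m := by
      by_contra! hm
      rw [Nat.clog_of_right_le_one (by omega)] at h
      omega
    rw [Nat.le_div_iff_mul_le (by positivity)]
    calc β % 2 ^ (Nat.clog 2 m - k) * 2 ^ k ≤ 2 ^ (Nat.clog 2 m - k) * 2 ^ k :=
          Nat.mul_le_mul_right _ (Nat.mod_lt _ (by positivity)).le
      _ = 2 ^ Nat.clog 2 m := by rw [← pow_add]; congr 1; omega
      _ ≤ 2 * m := pow_clog_le_two_mul hm

def treeBudget (k s : ℕ) : ℕ := s + 4 * s * Nat.clog 2 s / 2 ^ k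

/-- `D` bounds the size of each tree of the forest; the `+ 1` pays for rounding each tree's right
end down to its alignment. -/
def forestBudget (k D s : ℕ) : ℕ := s + 4 * s * (Nat.clog 2 D + 1) / 2 ^ k

lemma le_treeBudget (k s : ℕ) : s ≤ treeBudget k s := Nat.le_add_right _ _

lemma treeBudget_add_one_le (k s : ℕ) : treeBudget k s + 1 ≤ treeBudget k (s + 1) := by
  have : 4 * s * Nat.clog 2 s / 2 ^ k ≤ 4 * (s + 1) * Nat.clog 2 (s + 1) / 2 ^ k :=
    Nat.div_le_div_right (Nat.mul_le_mul (by omega) (Nat.clog_mono_right 2 (by omega)))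
  unfold treeBudget
  omega

lemma treeBudget_le_two_mul {k n s : ℕ} (hk : 4 * Nat.clog 2 n ≤ 2 ^ k) (hs : s ≤ n) :
    treeBudget k s ≤ 2 * s := by
  have h : 4 * s * Nat.clog 2 s ≤ s * 2 ^ k := by
    calc 4 * s * Nat.clog 2 s = s * (4 * Nat.clog 2 s) := by ring
      _ ≤ s * 2 ^ k :=
        Nat.mul_le_mul_left _ ((Nat.mul_le_mul_left 4 (Nat.clog_mono_right 2 hs)).trans hk)
  have := (Nat.div_le_div_right (c := 2 ^ k) h).trans_eq (Nat.mul_div_cancel _ (by positivity))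
  unfold treeBudget
  omega

/-- The largest tree of a forest of size `s` is exempt from alignment; the other trees then have
at most `s / 2` elements each, and `⌈log₂ (s / 2)⌉ + 1 ≤ ⌈log₂ s⌉` absorbs their alignment cost. -/
lemma treeBudget_add_forestBudget_le (k : ℕ) {c s : ℕ} (hc : 0 < c) (hcs : c ≤ s) :
    treeBudget k c + forestBudget k (s / 2) (s - c) ≤ treeBudget k s := by
  have hlogc : 4 * c * Nat.clog 2 c ≤ 4 * c * Nat.clog 2 s :=
    Nat.mul_le_mul_left _ (Nat.clog_mono_right 2 hcs)
  have hlogd : 4 * (s - c) * (Nat.clog 2 (s / 2) + 1) ≤ 4 * (s - c) * Nat.clog 2 s := by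
    rcases Nat.eq_zero_or_pos (s - c) with h | h
    · simp [h]
    · exact Nat.mul_le_mul_left _ (clog_div_two_add_one_le (by omega))
  have : 4 * c * Nat.clog 2 c / 2 ^ k + 4 * (s - c) * (Nat.clog 2 (s / 2) + 1) / 2 ^ k
      ≤ 4 * s * Nat.clog 2 s / 2 ^ k :=
    calc _ ≤ 4 * c * Nat.clog 2 s / 2 ^ k + 4 * (s - c) * Nat.clog 2 s / 2 ^ k :=
          Nat.add_le_add (Nat.div_le_div_right hlogc) (Nat.div_le_div_right hlogd)
      _ ≤ (4 * c * Nat.clog 2 s + 4 * (s - c) * Nat.clog 2 s) / 2 ^ k :=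
          Nat.div_add_div_le_add_div
      _ = 4 * s * Nat.clog 2 s / 2 ^ k := by
          rw [← Nat.add_mul, ← Nat.mul_add, Nat.add_sub_cancel' hcs]
  unfold treeBudget forestBudget
  omega

lemma treeBudget_add_forestBudget_le_forestBudget (k : ℕ) {c d D g : ℕ} (hcD : c ≤ D)
    (hg : g ≤ 4 * c / 2 ^ k) :
    treeBudget k c + g + forestBudget k D d ≤ forestBudget k D (c + d) := by
  have hc : 4 * c * Nat.clog 2 c / 2 ^ k ≤ 4 * c * Nat.clog 2 D / 2 ^ k :=
    Nat.div_le_div_right (Nat.mul_le_mul_left _ (Nat.clog_mono_right 2 hcD))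
  have hsum : 4 * c * Nat.clog 2 D / 2 ^ k + 4 * c / 2 ^ k + 4 * d * (Nat.clog 2 D + 1) / 2 ^ k
      ≤ 4 * (c + d) * (Nat.clog 2 D + 1) / 2 ^ k :=
    calc _ ≤ (4 * c * Nat.clog 2 D + 4 * c) / 2 ^ k + 4 * d * (Nat.clog 2 D + 1) / 2 ^ k :=
          Nat.add_le_add_right (Nat.div_add_div_le_add_div) _
      _ ≤ (4 * c * Nat.clog 2 D + 4 * c + 4 * d * (Nat.clog 2 D + 1)) / 2 ^ k :=
          Nat.div_add_div_le_add_div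
      _ = 4 * (c + d) * (Nat.clog 2 D + 1) / 2 ^ k := by ring_nf
  unfold treeBudget forestBudget
  omega

def interval (p : ℕ × ℕ) : Finset ℕ := Ico (p.1 - p.2) p.1

lemma interval_subset_Ico {p : ℕ × ℕ} {w B : ℕ} (h : w + p.2 ≤ p.1 ∧ p.1 ≤ B) :
    interval p ⊆ Ico w B :=
  Ico_subset_Ico (by omega) h.2

def labels (k T : ℕ) : Finset (ℕ × ℕ) :=
  {p ∈ Ioc 0 (2 ^ T) ×ˢ Icc 1 (2 ^ T) | p.2 ≤ p.1 ∧ 2 ^ (Nat.clog 2 p.2 - k) ∣ p.1}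

/-- Fibre over the scale `t = ⌈log₂ l⌉`: at most `2 ^ T / 2 ^ (t - k)` right ends and `2 ^ t`
lengths. -/
lemma card_labels_le (k T : ℕ) : #(labels k T) ≤ (T + 1) * (2 ^ T * 2 ^ k) := by
  rw [mul_comm, ← card_range (T + 1)]
  refine card_le_mul_card_image_of_maps_to (f := fun p => Nat.clog 2 p.2) (fun p hp => ?_) _
    fun t _ => ?_
  · simp only [labels, mem_filter, mem_product, mem_Ioc, mem_Icc] at hp
    exact mem_range_succ_iff.2 (Nat.clog_le_of_le_pow hp.1.2.2)
  calc #{p ∈ labels k T | Nat.clog 2 p.2 = t}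
      ≤ #({b ∈ Ioc 0 (2 ^ T) | 2 ^ (t - k) ∣ b} ×ˢ Icc 1 (2 ^ t)) := by
        refine card_le_card fun p hp => ?_
        simp only [labels, mem_filter, mem_product, mem_Ioc, mem_Icc] at hp ⊢
        obtain ⟨⟨⟨hb, hl⟩, -, hdvd⟩, rfl⟩ := hp
        exact ⟨⟨hb, hdvd⟩, hl.1, Nat.le_pow_clog one_lt_two _⟩
    _ = 2 ^ T / 2 ^ (t - k) * 2 ^ t := by
        rw [card_product, Nat.Ioc_filter_dvd_card_eq_div, Nat.card_Icc, Nat.add_sub_cancel]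
    _ ≤ 2 ^ T / 2 ^ (t - k) * (2 ^ (t - k) * 2 ^ k) := by
        rw [← pow_add]
        exact Nat.mul_le_mul_left _ (Nat.pow_le_pow_right two_pos (by omega))
    _ ≤ 2 ^ T * 2 ^ k := by
        rw [← mul_assoc]
        exact Nat.mul_le_mul_right _ (Nat.div_mul_le_self _ _)

lemma card_labels_le_of_four_le {n : ℕ} (hn : 4 ≤ n) :
    #(labels (Nat.clog 2 (4 * Nat.clog 2 n)) (Nat.clog 2 n + 1)) ≤
      128 * n * Nat.log 2 n ^ 3 * Nat.log 2 (Nat.log 2 n) ^ 128 := by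
  set H := Nat.clog 2 n
  set L := Nat.log 2 n
  have hL : 2 ≤ L := Nat.le_log_of_pow_le one_lt_two (by simpa using hn)
  have hHL : H ≤ L + 1 := Nat.clog_le_of_le_pow (Nat.lt_pow_succ_log_self one_lt_two n).le
  have hH : 1 ≤ H := Nat.clog_pos one_lt_two (by omega)
  have h2H : 2 ^ (H + 1) ≤ 4 * n := by
    have : 2 ^ H ≤ 2 * n := pow_clog_le_two_mul (by omega)
    rw [pow_succ]
    omega
  have h2k : 2 ^ Nat.clog 2 (4 * H) ≤ 8 * H := by
    have := pow_clog_le_two_mul (x := 4 * H) (by omega)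
    omega
  have hlogL : 1 ≤ Nat.log 2 L ^ 128 := Nat.one_le_pow _ _ (Nat.log_pos one_lt_two hL)
  calc _ ≤ (H + 1 + 1) * (2 ^ (H + 1) * 2 ^ Nat.clog 2 (4 * H)) := card_labels_le _ _
    _ ≤ (L + 3) * (4 * n * (8 * (L + 1))) :=
        Nat.mul_le_mul (by omega) (Nat.mul_le_mul h2H (by omega))
    _ = 32 * n * (L ^ 2 + 4 * L + 3) := by ring
    _ ≤ 32 * n * (4 * L ^ 3) := Nat.mul_le_mul_left _ (by nlinarith)
    _ = 128 * n * L ^ 3 := by ring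
    _ ≤ 128 * n * L ^ 3 * Nat.log 2 L ^ 128 := Nat.le_mul_of_pos_right _ hlogL

lemma interval_injective_labels (k T : ℕ) :
    Function.Injective fun p : labels k T => interval p := by
  rintro ⟨⟨b, l⟩, hp⟩ ⟨⟨b', l'⟩, hq⟩ h
  simp only [labels, mem_filter, mem_product, mem_Ioc, mem_Icc] at hp hq
  change Ico (b - l) b = Ico (b' - l') b' at h
  have h₁ := (Ico_subset_Ico_iff (by omega)).1 (le_of_eq h)
  have h₂ := (Ico_subset_Ico_iff (by omega)).1 (le_of_eq h.symm)
  ext <;> simp only <;> omega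

lemma isPartialOrder_of_injective {α β : Type*} [PartialOrder β] {g : α → β}
    (hg : Function.Injective g) : IsPartialOrder α fun u v => g u ≤ g v where
  refl _ := le_rfl
  trans _ _ _ := le_trans
  antisymm _ _ huv hvu := hg (le_antisymm huv hvu)

section Labeling

variable {X : Type*} [PartialOrder X]

structure IsIntervalLabeling (k : ℕ) (S : Finset X) (w B : ℕ) (I : X → ℕ × ℕ) : Prop where
  pos : ∀ x ∈ S, 0 < (I x).2
  aligned : ∀ x ∈ S, 2 ^ (Nat.clog 2 (I x).2 - k) ∣ (I x).1
  window : ∀ x ∈ S, w + (I x).2 ≤ (I x).1 ∧ (I x).1 ≤ B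
  ssubset_of_lt : ∀ x ∈ S, ∀ y ∈ S, x < y → interval (I x) ⊂ interval (I y)
  disjoint : ∀ x ∈ S, ∀ y ∈ S, ¬x ≤ y → ¬y ≤ x → Disjoint (interval (I x)) (interval (I y))

namespace IsIntervalLabeling

variable {k : ℕ} {S S₁ S₂ : Finset X} {w B w₁ B₁ w₂ B₂ : ℕ} {I I' : X → ℕ × ℕ}

lemma empty : IsIntervalLabeling k (∅ : Finset X) w B I :=
  ⟨by simp, by simp, by simp, by simp, by simp⟩

lemma congr (h : IsIntervalLabeling k S w B I) (he : Set.EqOn I' I S) :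
    IsIntervalLabeling k S w B I' where
  pos x hx := he hx ▸ h.pos x hx
  aligned x hx := he hx ▸ h.aligned x hx
  window x hx := he hx ▸ h.window x hx
  ssubset_of_lt x hx y hy hxy := he hx ▸ he hy ▸ h.ssubset_of_lt x hx y hy hxy
  disjoint x hx y hy hxy hyx := he hx ▸ he hy ▸ h.disjoint x hx y hy hxy hyx

lemma mono (h : IsIntervalLabeling k S w B I) (hw : w₁ ≤ w) (hB : B ≤ B₁) :
    IsIntervalLabeling k S w₁ B₁ I :=
  ⟨h.pos, h.aligned, fun x hx => by have := h.window x hx; omega, h.ssubset_of_lt, h.disjoint⟩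

lemma union [DecidableEq X] (h₁ : IsIntervalLabeling k S₁ w₁ B₁ I)
    (h₂ : IsIntervalLabeling k S₂ w₂ w₁ I) (hw₂ : w₂ ≤ w₁) (hw₁ : w₁ ≤ B₁)
    (hinc : ∀ x ∈ S₁, ∀ y ∈ S₂, ¬x ≤ y ∧ ¬y ≤ x) :
    IsIntervalLabeling k (S₁ ∪ S₂) w₂ B₁ I := by
  have hcross : ∀ x ∈ S₁, ∀ y ∈ S₂, Disjoint (interval (I x)) (interval (I y)) :=
    fun x hx y hy => disjoint_left.2 fun a hax hay => by
      have := mem_Ico.1 (interval_subset_Ico (h₁.window x hx) hax)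
      have := mem_Ico.1 (interval_subset_Ico (h₂.window y hy) hay)
      omega
  refine ⟨fun x hx => ?_, fun x hx => ?_, fun x hx => ?_, fun x hx y hy => ?_,
    fun x hx y hy => ?_⟩
  · exact (mem_union.1 hx).elim (h₁.pos x) (h₂.pos x)
  · exact (mem_union.1 hx).elim (h₁.aligned x) (h₂.aligned x)
  · rcases mem_union.1 hx with hx | hx
    · have := h₁.window x hx; omega
    · have := h₂.window x hx; omega
  · rcases mem_union.1 hx with hx | hx <;> rcases mem_union.1 hy with hy | hy
    · exact h₁.ssubset_of_lt x hx y hy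
    · exact fun hxy => absurd hxy.le (hinc x hx y hy).1
    · exact fun hxy => absurd hxy.le (hinc y hy x hx).2
    · exact h₂.ssubset_of_lt x hx y hy
  · rcases mem_union.1 hx with hx | hx <;> rcases mem_union.1 hy with hy | hy
    · exact h₁.disjoint x hx y hy
    · exact fun _ _ => hcross x hx y hy
    · exact fun _ _ => (hcross y hy x hx).symm
    · exact h₂.disjoint x hx y hy

lemma insert_top [DecidableEq X] {r : X} (hr : r ∈ S) (htop : ∀ x ∈ S, x ≤ r) {l : ℕ}
    (hl : 0 < l) (hlB : l ≤ B) (ha : 2 ^ (Nat.clog 2 l - k) ∣ B)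
    (h : IsIntervalLabeling k (S.erase r) w B I) (hw : B - l < w) :
    IsIntervalLabeling k S (B - l) B (Function.update I r (B, l)) := by
  have h' := h.congr (I' := Function.update I r (B, l))
    fun x hx => Function.update_of_ne (ne_of_mem_erase hx) _ _
  have hmem : ∀ x ∈ S, x ≠ r → x ∈ S.erase r := fun x hx hxr => mem_erase.2 ⟨hxr, hx⟩
  refine ⟨fun x hx => ?_, fun x hx => ?_, fun x hx => ?_, fun x hx y hy hxy => ?_,
    fun x hx y hy hxy hyx => ?_⟩
  · obtain rfl | hxr := eq_or_ne x r
    · simpa using hl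
    · exact h'.pos x (hmem x hx hxr)
  · obtain rfl | hxr := eq_or_ne x r
    · simpa using ha
    · exact h'.aligned x (hmem x hx hxr)
  · obtain rfl | hxr := eq_or_ne x r
    · simp only [Function.update_self]; omega
    · have := h'.window x (hmem x hx hxr); omega
  · have hxr : x ≠ r := fun hxr => (hxr ▸ hxy).not_ge (htop y hy)
    obtain rfl | hyr := eq_or_ne y r
    · have hsub := interval_subset_Ico (h'.window x (hmem x hx hxr))
      rw [Function.update_self]
      refine (ssubset_iff_of_subset (hsub.trans (Ico_subset_Ico_left (by omega)))).2
        ⟨B - l, mem_Ico.2 ⟨le_rfl, by omega⟩, fun hm => ?_⟩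
      have := mem_Ico.1 (hsub hm)
      omega
    · exact h'.ssubset_of_lt x (hmem x hx hxr) y (hmem y hy hyr) hxy
  · have hxr : x ≠ r := fun hxr => hyx (hxr ▸ htop y hy)
    have hyr : y ≠ r := fun hyr => hxy (hyr ▸ htop x hx)
    exact h'.disjoint x (hmem x hx hxr) y (hmem y hy hyr) hxy hyx

lemma le_iff_interval_subset (h : IsIntervalLabeling k S w B I) {a b : X} (ha : a ∈ S)
    (hb : b ∈ S) : a ≤ b ↔ interval (I a) ⊆ interval (I b) := by
  refine ⟨fun hab => ?_, fun hsub => ?_⟩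
  · obtain rfl | hlt := hab.eq_or_lt
    · exact subset_rfl
    · exact (h.ssubset_of_lt a ha b hb hlt).subset
  by_contra hab
  by_cases hba : b ≤ a
  · exact (h.ssubset_of_lt b hb a ha (lt_of_le_of_ne hba fun e => hab e.ge)).2 hsub
  · have hne : (interval (I a)).Nonempty := by
      have := h.pos a ha
      have := h.window a ha
      exact nonempty_Ico.2 (by omega)
    exact hne.ne_empty ((h.disjoint a ha b hb hab hba).eq_bot_of_le hsub)

end IsIntervalLabeling

lemma not_le_and_not_le_of_maximal (htree : IsTreeOrder X) {S : Finset X} {ρ x y : X}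
    (hρ : Maximal (· ∈ S) ρ) (hxρ : x ≤ ρ) (hy : y ∈ S) (hyρ : ¬y ≤ ρ) : ¬x ≤ y ∧ ¬y ≤ x := by
  refine ⟨fun hxy => ?_, fun hyx => hyρ (hyx.trans hxρ)⟩
  rcases htree x y ρ hxy hxρ with h | h
  · exact hyρ h
  · exact hyρ (hρ.2 hy h)

lemma exists_isIntervalLabeling_split [DecidableLE X] (htree : IsTreeOrder X) {k : ℕ}
    {S : Finset X} {ρ : X} (hρ : Maximal (· ∈ S) ρ) {w B B₁ l₁ l₂ : ℕ} {I₁ I₂ : X → ℕ × ℕ}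
    (h₁ : IsIntervalLabeling k {x ∈ S | x ≤ ρ} (B₁ - l₁) B₁ I₁)
    (h₂ : IsIntervalLabeling k {x ∈ S | ¬x ≤ ρ} (B₁ - l₁ - l₂) (B₁ - l₁) I₂)
    (hw : w ≤ B₁ - l₁ - l₂) (hB : B₁ ≤ B) :
    ∃ I, IsIntervalLabeling k S w B I := by
  classical
  refine ⟨fun x => if x ≤ ρ then I₁ x else I₂ x, ?_⟩
  rw [← filter_union_filter_not_eq (· ≤ ρ) S]
  refine ((h₁.congr fun x hx => if_pos (mem_filter.1 hx).2).union
    (h₂.congr fun x hx => if_neg (mem_filter.1 hx).2) (Nat.sub_le _ _) (Nat.sub_le _ _)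
    fun x hx y hy => ?_).mono hw hB
  exact not_le_and_not_le_of_maximal htree hρ (mem_filter.1 hx).2 (mem_filter.1 hy).1
    (mem_filter.1 hy).2

lemma maximal_of_forall_card_filter_le [DecidableLE X] {S : Finset X} {ρ : X} (hρ : ρ ∈ S)
    (hmax : ∀ x ∈ S, #{y ∈ S | y ≤ x} ≤ #{y ∈ S | y ≤ ρ}) : Maximal (· ∈ S) ρ := by
  refine ⟨hρ, fun z hz hρz => ?_⟩
  have hsub : {y ∈ S | y ≤ ρ} ⊆ {y ∈ S | y ≤ z} :=
    fun y hy => mem_filter.2 ⟨(mem_filter.1 hy).1, (mem_filter.1 hy).2.trans hρz⟩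
  have := eq_of_subset_of_card_le hsub (hmax z hz)
  exact (mem_filter.1 (this ▸ mem_filter.2 ⟨hz, le_rfl⟩ : z ∈ {y ∈ S | y ≤ ρ})).2

lemma two_mul_card_filter_le_card [DecidableLE X] (htree : IsTreeOrder X) {S : Finset X} {ρ : X}
    (hρ : ρ ∈ S) (hmax : ∀ x ∈ S, #{y ∈ S | y ≤ x} ≤ #{y ∈ S | y ≤ ρ}) {x : X} (hx : x ∈ S)
    (hxρ : ¬x ≤ ρ) : 2 * #{y ∈ S | y ≤ x} ≤ #S := by
  classical
  have hdisj : Disjoint {y ∈ S | y ≤ x} {y ∈ S | y ≤ ρ} := by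
    refine disjoint_filter.2 fun y _ hyx hyρ => ?_
    rcases htree y x ρ hyx hyρ with h | h
    · exact hxρ h
    · exact hxρ ((maximal_of_forall_card_filter_le hρ hmax).2 hx h)
  have := card_union_of_disjoint hdisj ▸ card_le_card (union_subset (filter_subset _ S)
    (filter_subset _ S))
  have := hmax x hx
  omega

def IsTreeLabelable (k : ℕ) (S : Finset X) : Prop :=
  ∀ r ∈ S, (∀ x ∈ S, x ≤ r) → ∀ B, treeBudget k #S ≤ B →
    2 ^ (Nat.clog 2 (treeBudget k #S) - k) ∣ B →
    ∃ I, IsIntervalLabeling k S (B - treeBudget k #S) B I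

lemma exists_isIntervalLabeling_of_card_filter_le [DecidableLE X] (htree : IsTreeOrder X)
    {k n D : ℕ} (hk : 4 * Nat.clog 2 n ≤ 2 ^ k) (S : Finset X) (hSn : #S ≤ n)
    (hS : ∀ T ⊆ S, IsTreeLabelable k T) (hD : ∀ x ∈ S, #{y ∈ S | y ≤ x} ≤ D) (β : ℕ)
    (hβ : forestBudget k D #S ≤ β) :
    ∃ I, IsIntervalLabeling k S (β - forestBudget k D #S) β I := by
  induction S using Finset.strongInduction generalizing β with
  | H S ih =>
  rcases S.eq_empty_or_nonempty with rfl | hne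
  · exact ⟨fun _ => 0, .empty⟩
  obtain ⟨ρ, hρ⟩ := S.exists_maximal hne
  set C := {x ∈ S | x ≤ ρ}
  set R := {x ∈ S | ¬x ≤ ρ}
  have hρC : ρ ∈ C := mem_filter.2 ⟨hρ.1, le_rfl⟩
  have hcard : #C + #R = #S := card_filter_add_card_filter_not _
  have hCn : #C ≤ n := (card_le_card (filter_subset _ S)).trans hSn
  set gap := β % 2 ^ (Nat.clog 2 (treeBudget k #C) - k)
  have hgap : gap ≤ 4 * #C / 2 ^ k :=
    calc gap ≤ 2 * treeBudget k #C / 2 ^ k :=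
          mod_pow_clog_sub_le β k _
      _ ≤ 4 * #C / 2 ^ k :=
          Nat.div_le_div_right (by have := treeBudget_le_two_mul hk hCn; omega)
  have hbudget := hcard ▸
    treeBudget_add_forestBudget_le_forestBudget k (c := #C) (d := #R) (hD ρ hρ.1) hgap
  obtain ⟨I₁, h₁⟩ := hS C (filter_subset _ S) ρ hρC (fun x hx => (mem_filter.1 hx).2)
    (β - gap) (by omega) (Nat.dvd_sub_mod β)
  obtain ⟨I₂, h₂⟩ := ih R (filter_ssubset.2 ⟨ρ, hρ.1, not_not.2 le_rfl⟩)
    ((card_le_card (filter_subset _ S)).trans hSn)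
    (fun T hT => hS T (hT.trans (filter_subset _ S)))
    (fun x hx => (card_le_card (filter_subset_filter _ (filter_subset _ S))).trans
      (hD x (mem_filter.1 hx).1))
    (β - gap - treeBudget k #C) (by omega)
  exact exists_isIntervalLabeling_split htree hρ h₁ h₂ (by omega) (Nat.sub_le _ _)

lemma exists_isIntervalLabeling_forest (htree : IsTreeOrder X) {k n : ℕ}
    (hk : 4 * Nat.clog 2 n ≤ 2 ^ k) (S : Finset X) (hSn : #S ≤ n)
    (hS : ∀ T ⊆ S, IsTreeLabelable k T) {cap B : ℕ} (hcap : treeBudget k #S ≤ cap)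
    (hB : cap ≤ B) (ha : 2 ^ (Nat.clog 2 cap - k) ∣ B) :
    ∃ I, IsIntervalLabeling k S (B - cap) B I := by
  classical
  rcases S.eq_empty_or_nonempty with rfl | hne
  · exact ⟨fun _ => 0, .empty⟩
  obtain ⟨ρ, hρS, hmax⟩ := exists_max_image S (fun x => #{y ∈ S | y ≤ x}) hne
  set C := {x ∈ S | x ≤ ρ}
  set R := {x ∈ S | ¬x ≤ ρ}
  have hρC : ρ ∈ C := mem_filter.2 ⟨hρS, le_rfl⟩
  have hcard : #C + #R = #S := card_filter_add_card_filter_not _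
  have hbudget := treeBudget_add_forestBudget_le k (card_pos.2 ⟨ρ, hρC⟩)
    (card_le_card (filter_subset _ S))
  rw [show #S - #C = #R by omega] at hbudget
  obtain ⟨I₁, h₁⟩ := hS C (filter_subset _ S) ρ hρC (fun x hx => (mem_filter.1 hx).2) B
    (by omega) ((pow_dvd_pow 2 (Nat.sub_le_sub_right
      (Nat.clog_mono_right 2 (by omega : treeBudget k #C ≤ cap)) k)).trans ha)
  obtain ⟨I₂, h₂⟩ := exists_isIntervalLabeling_of_card_filter_le htree hk R
    ((card_le_card (filter_subset _ S)).trans hSn) (fun T hT => hS T (hT.trans (filter_subset _ S)))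
    (D := #S / 2) (fun x hx => (card_le_card (filter_subset_filter _ (filter_subset _ S))).trans
      (by have := two_mul_card_filter_le_card htree hρS hmax (mem_filter.1 hx).1
            (mem_filter.1 hx).2
          omega))
    (B - treeBudget k #C) (by omega)
  exact exists_isIntervalLabeling_split htree (maximal_of_forall_card_filter_le hρS hmax) h₁ h₂
    (by omega) le_rfl

lemma isTreeLabelable (htree : IsTreeOrder X) {k n : ℕ} (hk : 4 * Nat.clog 2 n ≤ 2 ^ k)
    (S : Finset X) (hSn : #S ≤ n) : IsTreeLabelable k S := by
  classical
  induction S using Finset.strongInduction with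
  | H S ih =>
  intro r hr htop B hB ha
  have hcard := card_erase_add_one hr
  have hbudget : treeBudget k #(S.erase r) + 1 ≤ treeBudget k #S :=
    hcard ▸ treeBudget_add_one_le k _
  have hpos : 0 < treeBudget k #S := (card_pos.2 ⟨r, hr⟩).trans_le (le_treeBudget _ _)
  obtain ⟨I, hI⟩ := exists_isIntervalLabeling_forest htree hk (S.erase r) (by omega)
    (fun T hT => ih T (hT.trans_ssubset (erase_ssubset hr)) ((card_le_card hT).trans (by omega)))
    (cap := treeBudget k #S - 1) (by omega) (by omega)
    ((pow_dvd_pow 2 (Nat.sub_le_sub_right (Nat.clog_mono_right 2 (Nat.sub_le _ 1)) k)).trans ha)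
  exact ⟨_, hI.insert_top hr htop hpos hB ha (by omega)⟩

theorem exists_labels_embedding [Fintype X] (htree : IsTreeOrder X) {k T : ℕ}
    (hk : 4 * Nat.clog 2 (Fintype.card X) ≤ 2 ^ k) (hT : 2 * Fintype.card X ≤ 2 ^ T) :
    ∃ I : X → ℕ × ℕ, (∀ x, I x ∈ labels k T) ∧ ∀ a b, a ≤ b ↔ interval (I a) ⊆ interval (I b) := by
  have hbudget : treeBudget k #(univ : Finset X) ≤ 2 ^ T :=
    (treeBudget_le_two_mul hk card_univ.le).trans (card_univ (α := X) ▸ hT)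
  obtain ⟨I, hI⟩ := exists_isIntervalLabeling_forest htree hk univ card_univ.le
    (fun S _ => isTreeLabelable htree hk S (card_le_univ S)) le_rfl hbudget
    (pow_dvd_pow 2 ((Nat.sub_le _ _).trans (Nat.clog_le_of_le_pow hbudget)))
  refine ⟨I, fun x => ?_, fun a b => hI.le_iff_interval_subset (mem_univ a) (mem_univ b)⟩
  have := hI.pos x (mem_univ x)
  have := hI.window x (mem_univ x)
  simp only [labels, mem_filter, mem_product, mem_Ioc, mem_Icc]
  exact ⟨⟨⟨by omega, this.2⟩, by omega, by omega⟩, by omega, hI.aligned x (mem_univ x)⟩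

end Labeling

end AncestryLabeling

open AncestryLabeling Finset

/-- Consistent ancestry labeling: there is a partial order on a label set of
size `O(n · (log₂ n)³ · (log₂ log₂ n)^{O(1)})` into which every tree order
with at most `n` elements embeds as an induced suborder. -/
theorem consistent_ancestry_scheme :
    ∃ C : ℕ, ∀ n : ℕ, 4 ≤ n →
      ∃ (N : ℕ) (r : Fin N → Fin N → Prop),
        N ≤ C * n * (Nat.log 2 n) ^ 3 * (Nat.log 2 (Nat.log 2 n)) ^ C ∧
        IsPartialOrder (Fin N) r ∧
        ∀ (X : Type) [Fintype X] [PartialOrder X],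
          IsTreeOrder X → Fintype.card X ≤ n →
          ∃ f : X → Fin N,
            Function.Injective f ∧ ∀ a b : X, a ≤ b ↔ r (f a) (f b) := by
  refine ⟨128, fun n hn => ?_⟩
  set k := Nat.clog 2 (4 * Nat.clog 2 n)
  set T := Nat.clog 2 n + 1
  let e := (labels k T).equivFin.symm
  refine ⟨#(labels k T), fun u v => interval (e u) ⊆ interval (e v),
    card_labels_le_of_four_le hn,
    isPartialOrder_of_injective ((interval_injective_labels k T).comp e.injective), ?_⟩
  intro X _ _ htree hX
  obtain ⟨I, hI, hle⟩ := exists_labels_embedding htree (k := k) (T := T)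
    ((Nat.mul_le_mul_left 4 (Nat.clog_mono_right 2 hX)).trans (Nat.le_pow_clog one_lt_two _))
    (by have := Nat.le_pow_clog one_lt_two n; rw [pow_succ]; omega)
  refine ⟨fun x => e.symm ⟨I x, hI x⟩, fun a b hab => ?_, by simpa using hle⟩
  have hIab : I a = I b := congrArg Subtype.val (e.symm.injective hab)
  exact le_antisymm ((hle a b).2 (by rw [hIab])) ((hle b a).2 (by rw [hIab]))
end

section
/- There exists a constant C such that for every integer k ≥ 1 and every n ≥ 4 there exists a finite poset U with at most (C · n · (log₂ n)³ · (log₂ log₂ n)^C)^k elements such that every poset with at most n elements and tree-dimension at most k embeds into U as an induced suborder. In particular, for every fixed k there is a universal poset of size O(n^k · log^{3k+o(k)} n) for the family 𝒫(n,k) of n-element posets with tree-dimension at most k. -/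
/-- A relation is a *tree order relation* if it is a partial order in which
any two incomparable elements have no common upper bound. -/
def IsTreeOrderRel (X : Type*) (r : X → X → Prop) : Prop :=
  IsPartialOrder X r ∧ ∀ x y z : X, r x y → r x z → (r y z ∨ r z y)

/-- A poset has tree-dimension at most `k` if its order is the intersection
of `k` tree orders on the same ground set. -/
def TreeDimLE (X : Type*) [PartialOrder X] (k : ℕ) : Prop :=
  ∃ r : Fin k → X → X → Prop,
    (∀ i, IsTreeOrderRel X (r i)) ∧
    (∀ x y : X, x ≤ y ↔ ∀ i, r i x y)

/-! Every tree order on at most `n` points embeds, by inclusion, into the family of intervals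
`[s, s + ℓ) ⊆ [0, n (2 log n + 1))` whose start `s` is a multiple of `2 ^ (log ℓ - w)`, where
`2 ^ w` is of order `log n`: trees are packed largest first, each root receiving a window of length
`σ (2 log σ + 1)` for its subtree size `σ`. For each length `ℓ` there are
`O(2 ^ w n log n / ℓ)` admissible starts, so the family has `O(n log³ n)` members, and a poset of
tree-dimension `k` embeds into the `k`-th power of this family with the coordinatewise order. -/

open Finset

namespace UniversalPoset

def windowLen (s : ℕ) : ℕ := s * (2 * Nat.log 2 s + 1)

/-- Intervals of length `ℓ` may only start at multiples of `grain w ℓ`, which is about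
`ℓ / 2 ^ w`. -/
def grain (w ℓ : ℕ) : ℕ := 2 ^ (Nat.log 2 ℓ - w)

lemma windowLen_strictMono : StrictMono windowLen := fun s t hst =>
  Nat.mul_lt_mul_of_lt_of_le hst (by have := Nat.log_mono_right (b := 2) hst.le; omega)
    (by omega)

lemma windowLen_add_le (s t : ℕ) :
    windowLen s + windowLen t + 2 * min s t ≤ windowLen (s + t) := by
  wlog hts : t ≤ s generalizing s t
  · simpa [add_comm, min_comm] using this t s (by omega)
  rcases Nat.eq_zero_or_pos t with rfl | ht
  · simp [windowLen]
  have hlog_s : Nat.log 2 s ≤ Nat.log 2 (s + t) := Nat.log_mono_right (by omega)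
  have hlog_t : Nat.log 2 t + 1 ≤ Nat.log 2 (s + t) := by
    rw [← Nat.log_mul_base (by norm_num) ht.ne']
    exact Nat.log_mono_right (by omega)
  simp only [windowLen, min_eq_right hts]
  nlinarith

lemma grain_pos (w ℓ : ℕ) : 0 < grain w ℓ := Nat.two_pow_pos _

lemma grain_dvd_grain (w : ℕ) {ℓ ℓ' : ℕ} (h : ℓ ≤ ℓ') : grain w ℓ ∣ grain w ℓ' :=
  pow_dvd_pow 2 (by have := Nat.log_mono_right (b := 2) h; omega)

lemma grain_windowLen_le {w s : ℕ} (hw : 2 * Nat.log 2 s + 1 < 2 ^ w) :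
    grain w (windowLen s) ≤ s + 1 := by
  rcases le_or_gt (Nat.log 2 (windowLen s)) w with h | h
  · simp [grain, Nat.sub_eq_zero_of_le h]
  · have hpow : grain w (windowLen s) * 2 ^ w = 2 ^ Nat.log 2 (windowLen s) := by
      rw [grain, ← pow_add, Nat.sub_add_cancel h.le]
    have hle : 2 ^ Nat.log 2 (windowLen s) ≤ windowLen s := Nat.pow_log_le_self 2 (by
      intro h0; simp [h0] at h)
    have hlt : windowLen s ≤ s * 2 ^ w := Nat.mul_le_mul_left s hw.le
    have : grain w (windowLen s) * 2 ^ w ≤ (s + 1) * 2 ^ w := by nlinarith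
    exact Nat.le_of_mul_le_mul_right this (Nat.two_pow_pos w)

lemma exists_dvd_mem_Ico {q : ℕ} (hq : 0 < q) (m : ℕ) : ∃ a, q ∣ a ∧ m ≤ a ∧ a < m + q := by
  refine ⟨q * ((m + q - 1) / q), dvd_mul_right _ _, ?_, ?_⟩
  · have := Nat.div_add_mod (m + q - 1) q
    have := Nat.mod_lt (m + q - 1) hq
    omega
  · have := Nat.mul_div_le (m + q - 1) q
    omega

def IsAlignedInterval (w : ℕ) (I : Finset ℕ) : Prop :=
  ∃ s ℓ, 0 < ℓ ∧ grain w ℓ ∣ s ∧ I = Ico s (s + ℓ)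

lemma IsAlignedInterval.nonempty {w : ℕ} {I : Finset ℕ} (hI : IsAlignedInterval w I) :
    I.Nonempty := by
  obtain ⟨s, ℓ, hℓ, -, rfl⟩ := hI
  exact nonempty_Ico.mpr (by omega)

def alignedIntervals (w L : ℕ) : Finset (Finset ℕ) :=
  ((range L ×ˢ range (L + 1)).filter (fun p => grain w p.2 ∣ p.1)).image
    (fun p => Ico p.1 (p.1 + p.2))

lemma IsAlignedInterval.mem_alignedIntervals {w L : ℕ} {I : Finset ℕ}
    (hI : IsAlignedInterval w I) (hIL : I ⊆ range L) : I ∈ alignedIntervals w L := by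
  obtain ⟨s, ℓ, hℓ, hs, rfl⟩ := hI
  rw [range_eq_Ico, Ico_subset_Ico_iff (by omega)] at hIL
  simp only [alignedIntervals, mem_image, mem_filter, mem_product, mem_range]
  exact ⟨(s, ℓ), ⟨⟨by omega, by omega⟩, hs⟩, rfl⟩

lemma card_filter_dvd_range_le (L d : ℕ) : #{s ∈ range L | d ∣ s} ≤ L / d + 1 := by
  calc #{s ∈ range L | d ∣ s}
      ≤ #(insert 0 {s ∈ range (L + 1) | s ≠ 0 ∧ d ∣ s}) := by
        refine card_le_card fun s => ?_
        simp only [mem_filter, mem_range, mem_insert]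
        omega
    _ ≤ L / d + 1 := (card_insert_le _ _).trans (by rw [Nat.card_multiples'])

/-- On the dyadic block `2 ^ t ≤ ℓ < 2 ^ (t + 1)` the grain is at least `2 ^ (t - w)`, so each
block contributes at most `L * 2 ^ w`. -/
lemma sum_div_grain_range_two_pow_le (w L T : ℕ) :
    ∑ ℓ ∈ range (2 ^ T), L / grain w ℓ ≤ L + T * (L * 2 ^ w) := by
  induction T with
  | zero => simp [grain]
  | succ T ih =>
    have hblock : ∑ ℓ ∈ Ico (2 ^ T) (2 ^ (T + 1)), L / grain w ℓ ≤ L * 2 ^ w := by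
      have hterm : ∀ ℓ ∈ Ico (2 ^ T) (2 ^ (T + 1)), L / grain w ℓ ≤ L / 2 ^ (T - w) := by
        intro ℓ hℓ
        rw [mem_Ico] at hℓ
        have hlog : T ≤ Nat.log 2 ℓ :=
          (Nat.le_log_iff_pow_le (by norm_num) ((Nat.two_pow_pos T).trans_le hℓ.1).ne').mpr hℓ.1
        exact Nat.div_le_div_left (Nat.pow_le_pow_right (by norm_num) (by omega))
          (Nat.two_pow_pos _)
      calc ∑ ℓ ∈ Ico (2 ^ T) (2 ^ (T + 1)), L / grain w ℓ
          ≤ 2 ^ T * (L / 2 ^ (T - w)) := by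
            refine (sum_le_sum hterm).trans_eq ?_
            rw [sum_const, Nat.card_Ico, smul_eq_mul, pow_succ, mul_two, Nat.add_sub_cancel]
        _ ≤ 2 ^ w * 2 ^ (T - w) * (L / 2 ^ (T - w)) := by
            rw [← pow_add]
            exact Nat.mul_le_mul_right _ (Nat.pow_le_pow_right (by norm_num) (by omega))
        _ ≤ L * 2 ^ w := by
            rw [mul_assoc, mul_comm L]
            exact Nat.mul_le_mul_left _ (Nat.mul_div_le L _)
    rw [range_eq_Ico, ← sum_Ico_consecutive _ (Nat.zero_le _)
      (Nat.pow_le_pow_right (by norm_num) (Nat.le_succ T)), ← range_eq_Ico]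
    linarith

lemma card_alignedIntervals_le {L T : ℕ} (hT : L < 2 ^ T) (w : ℕ) :
    #(alignedIntervals w L) ≤ 2 * L + 1 + T * (L * 2 ^ w) := by
  have hpairs : #((range L ×ˢ range (L + 1)).filter (fun p => grain w p.2 ∣ p.1))
      = ∑ ℓ ∈ range (L + 1), #{s ∈ range L | grain w ℓ ∣ s} := by
    rw [card_filter, sum_product_right]
    exact sum_congr rfl fun ℓ _ => (card_filter _ _).symm
  calc #(alignedIntervals w L)
      ≤ ∑ ℓ ∈ range (L + 1), #{s ∈ range L | grain w ℓ ∣ s} := hpairs ▸ card_image_le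
    _ ≤ ∑ ℓ ∈ range (L + 1), (L / grain w ℓ + 1) :=
        sum_le_sum fun ℓ _ => card_filter_dvd_range_le L _
    _ ≤ ∑ ℓ ∈ range (2 ^ T), L / grain w ℓ + (L + 1) := by
        rw [sum_add_distrib, sum_const, card_range, smul_eq_mul, mul_one]
        exact Nat.add_le_add_right (sum_le_sum_of_subset (range_subset_range.mpr hT)) _
    _ ≤ 2 * L + 1 + T * (L * 2 ^ w) := by
        have := sum_div_grain_range_two_pow_le w L T
        omega

section Embedding

variable {P α : Type*} {r : P → P → Prop}

def EmbedsOn (r : P → P → Prop) (F : Finset P) (g : P → Finset α) : Prop :=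
  ∀ x ∈ F, ∀ y ∈ F, r x y ↔ g x ⊆ g y

lemma EmbedsOn.insert_top [DecidableEq P] {F : Finset P} {g : P → Finset α} {x₀ : P}
    {I : Finset α} (hg : EmbedsOn r F g) (hx₀ : r x₀ x₀)
    (hbelow : ∀ x ∈ F, r x x₀ ∧ ¬ r x₀ x) (hI : ∀ x ∈ F, g x ⊂ I) :
    EmbedsOn r (insert x₀ F) (Function.update g x₀ I) := by
  have hne : ∀ x ∈ F, x ≠ x₀ := fun x hx h => (hbelow x hx).2 (h ▸ hx₀)
  intro x hx y hy
  rcases mem_insert.mp hx with rfl | hxF <;> rcases mem_insert.mp hy with rfl | hyF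
  · simp [hx₀]
  · simp only [Function.update_self, Function.update_of_ne (hne y hyF)]
    exact iff_of_false (hbelow y hyF).2 (hI y hyF).not_subset
  · simp only [Function.update_self, Function.update_of_ne (hne x hxF)]
    exact iff_of_true (hbelow x hxF).1 (hI x hxF).subset
  · simpa only [Function.update_of_ne (hne x hxF), Function.update_of_ne (hne y hyF)]
      using hg x hxF y hyF

lemma EmbedsOn.union [DecidableEq P] {F₁ F₂ : Finset P} {g₁ g₂ : P → Finset α}
    (hg₁ : EmbedsOn r F₁ g₁) (hg₂ : EmbedsOn r F₂ g₂)
    (hunrel : ∀ x ∈ F₁, ∀ y ∈ F₂, ¬ r x y ∧ ¬ r y x)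
    (hdisj : ∀ x ∈ F₁, ∀ y ∈ F₂, Disjoint (g₁ x) (g₂ y))
    (hne₁ : ∀ x ∈ F₁, (g₁ x).Nonempty) (hne₂ : ∀ y ∈ F₂, (g₂ y).Nonempty) :
    EmbedsOn r (F₁ ∪ F₂) (F₁.piecewise g₁ g₂) := by
  have hnot : ∀ {I J : Finset α}, Disjoint I J → I.Nonempty → ¬ I ⊆ J := fun hIJ hI hsub =>
    hI.ne_empty (disjoint_self_iff_empty _ |>.mp (hIJ.mono_right hsub))
  intro x hx y hy
  by_cases hx₁ : x ∈ F₁ <;> by_cases hy₁ : y ∈ F₁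
  · simpa only [piecewise_eq_of_mem _ _ _ hx₁, piecewise_eq_of_mem _ _ _ hy₁]
      using hg₁ x hx₁ y hy₁
  · have hy₂ := (mem_union.mp hy).resolve_left hy₁
    simp only [piecewise_eq_of_mem _ _ _ hx₁, piecewise_eq_of_notMem _ _ _ hy₁]
    exact iff_of_false (hunrel x hx₁ y hy₂).1 (hnot (hdisj x hx₁ y hy₂) (hne₁ x hx₁))
  · have hx₂ := (mem_union.mp hx).resolve_left hx₁
    simp only [piecewise_eq_of_notMem _ _ _ hx₁, piecewise_eq_of_mem _ _ _ hy₁]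
    exact iff_of_false (hunrel y hy₁ x hx₂).2 (hnot (hdisj y hy₁ x hx₂).symm (hne₂ x hx₂))
  · simpa only [piecewise_eq_of_notMem _ _ _ hx₁, piecewise_eq_of_notMem _ _ _ hy₁]
      using hg₂ x ((mem_union.mp hx).resolve_left hx₁) y ((mem_union.mp hy).resolve_left hy₁)

end Embedding

section Forest

variable {P : Type*} [Fintype P] {r : P → P → Prop}

open Classical in
noncomputable def below (r : P → P → Prop) (x : P) : Finset P := {y | r y x}

noncomputable def subtreeSize (r : P → P → Prop) (x : P) : ℕ := #(below r x)

def IsDownClosed (r : P → P → Prop) (F : Finset P) : Prop := ∀ x ∈ F, ∀ y, r y x → y ∈ F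

@[simp]
lemma mem_below {x y : P} : y ∈ below r x ↔ r y x := by
  classical
  simp [below]

lemma IsDownClosed.below_subset {F : Finset P} (hF : IsDownClosed r F) {x : P} (hx : x ∈ F) :
    below r x ⊆ F := fun _ hy => hF x hx _ (mem_below.mp hy)

lemma IsDownClosed.sup_subtreeSize_le {F : Finset P} (hF : IsDownClosed r F) :
    F.sup (subtreeSize r) ≤ #F :=
  Finset.sup_le fun _ hx => card_le_card (hF.below_subset hx)

lemma isDownClosed_below_erase [DecidableEq P] [IsPartialOrder P r] (x : P) :
    IsDownClosed r ((below r x).erase x) := by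
  intro y hy z hzy
  obtain ⟨hyx, hry⟩ := mem_erase.mp hy
  rw [mem_below] at hry
  refine mem_erase.mpr ⟨?_, mem_below.mpr (_root_.trans hzy hry)⟩
  rintro rfl
  exact hyx (antisymm hry hzy)

lemma eq_of_rel_of_subtreeSize_eq_sup [IsPartialOrder P r] {F : Finset P} {x v : P}
    (hx : subtreeSize r x = F.sup (subtreeSize r)) (hv : v ∈ F) (hxv : r x v) : v = x := by
  have hsub : below r x ⊆ below r v := fun y hy =>
    mem_below.mpr (_root_.trans (mem_below.mp hy) hxv)
  have hcard : #(below r v) ≤ #(below r x) := (le_sup (f := subtreeSize r) hv).trans hx.ge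
  have hvx : r v x := mem_below.mp (eq_of_subset_of_card_le hsub hcard ▸ mem_below.mpr (refl v))
  exact antisymm hvx hxv

lemma _root_.IsTreeOrderRel.not_rel_of_mem_sdiff_below [DecidableEq P]
    (hr : IsTreeOrderRel P r) {F : Finset P} {x v z : P} (hmax : ∀ v ∈ F, r x v → v = x)
    (hv : v ∈ F \ below r x) (hzx : r z x) : ¬ r z v := by
  have := hr.1
  obtain ⟨hvF, hvx⟩ := mem_sdiff.mp hv
  intro hzv
  rcases hr.2 z v x hzv hzx with h | h
  · exact hvx (mem_below.mpr h)
  · exact hvx (by rw [hmax v hvF h]; exact mem_below.mpr (refl x))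

lemma _root_.IsTreeOrderRel.isDownClosed_sdiff_below [DecidableEq P]
    (hr : IsTreeOrderRel P r) {F : Finset P} (hF : IsDownClosed r F) {x : P}
    (hmax : ∀ v ∈ F, r x v → v = x) :
    IsDownClosed r (F \ below r x) := fun y hy z hzy =>
  mem_sdiff.mpr ⟨hF y (mem_sdiff.mp hy).1 z hzy,
    fun hzx => hr.not_rel_of_mem_sdiff_below hmax hy (mem_below.mp hzx) hzy⟩

lemma _root_.IsTreeOrderRel.not_rel_of_mem_below_of_mem_sdiff [DecidableEq P]
    (hr : IsTreeOrderRel P r) {F : Finset P} {x u v : P} (hmax : ∀ v ∈ F, r x v → v = x)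
    (hu : u ∈ below r x) (hv : v ∈ F \ below r x) : ¬ r u v ∧ ¬ r v u := by
  have := hr.1
  rw [mem_below] at hu
  exact ⟨hr.not_rel_of_mem_sdiff_below hmax hv hu,
    fun hvu => (mem_sdiff.mp hv).2 (mem_below.mpr (_root_.trans hvu hu))⟩

end Forest

/-- The root `x₀` of a largest tree of the forest `F` gets the window `[a, a + windowLen σ)`,
the rest of its tree is packed strictly inside it, and the remaining forest is packed after it, from the next multiple of its own grain. The `2 log` slack in
`windowLen` absorbs that rounding because the remaining trees are no larger than the first. -/
theorem _root_.IsTreeOrderRel.exists_alignedPacking {P : Type*} [Fintype P] [DecidableEq P]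
    {r : P → P → Prop} (hr : IsTreeOrderRel P r) {w : ℕ}
    (hw : 2 * Nat.log 2 (Fintype.card P) + 1 < 2 ^ w) (F : Finset P) (hF : IsDownClosed r F)
    (a : ℕ) (ha : grain w (windowLen (F.sup (subtreeSize r))) ∣ a) :
    ∃ g : P → Finset ℕ,
      (∀ x ∈ F, IsAlignedInterval w (g x) ∧ g x ⊆ Ico a (a + windowLen #F)) ∧ EmbedsOn r F g := by
  have := hr.1
  induction F using Finset.strongInduction generalizing a with
  | H F ih =>
  rcases F.eq_empty_or_nonempty with rfl | hne
  · exact ⟨fun _ => ∅, by simp, by simp [EmbedsOn]⟩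
  obtain ⟨x₀, hx₀F, hx₀⟩ := exists_mem_eq_sup F hne (subtreeSize r)
  have hmax : ∀ v ∈ F, r x₀ v → v = x₀ := fun v hv =>
    eq_of_rel_of_subtreeSize_eq_sup hx₀.symm hv
  set σ := subtreeSize r x₀
  set D := below r x₀
  set F₂ := F \ D
  set I := Ico a (a + windowLen σ)
  have hx₀D : x₀ ∈ D := mem_below.mpr (refl x₀)
  have hDF : D ⊆ F := hF.below_subset hx₀F
  have hσ : 0 < σ := card_pos.mpr ⟨x₀, hx₀D⟩
  have hcardF : #F = σ + #F₂ := by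
    rw [card_sdiff_of_subset hDF]
    exact (Nat.add_sub_cancel' (card_le_card hDF)).symm
  obtain ⟨g₁, hg₁, hg₁r⟩ := ih (D.erase x₀) ((erase_ssubset hx₀D).trans_subset hDF)
    (isDownClosed_below_erase x₀) a <| (grain_dvd_grain w <| windowLen_strictMono.monotone <|
      sup_mono ((erase_subset _ _).trans hDF)).trans ha
  have hF₂ : IsDownClosed r F₂ := hr.isDownClosed_sdiff_below hF hmax
  set s₂ := F₂.sup (subtreeSize r)
  obtain ⟨a', hga', ha'lo, ha'hi⟩ :=
    exists_dvd_mem_Ico (grain_pos w (windowLen s₂)) (a + windowLen σ)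
  obtain ⟨g₂, hg₂, hg₂r⟩ := ih F₂ (sdiff_ssubset hDF ⟨x₀, hx₀D⟩) hF₂ a' hga'
  have hwidth : a' + windowLen #F₂ ≤ a + windowLen #F := by
    have hs₂σ : s₂ ≤ σ := hx₀ ▸ sup_mono sdiff_subset
    have hs₂F₂ : s₂ ≤ #F₂ := hF₂.sup_subtreeSize_le
    have hgrain : grain w (windowLen s₂) ≤ s₂ + 1 := by
      refine grain_windowLen_le (lt_of_le_of_lt ?_ hw)
      have := Nat.log_mono_right (b := 2) (hs₂F₂.trans (card_le_univ F₂))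
      omega
    have := windowLen_add_le σ #F₂
    rw [hcardF]
    omega
  have hg₁I : ∀ x ∈ D.erase x₀, g₁ x ⊂ I := by
    have hlt : windowLen #(D.erase x₀) < windowLen σ :=
      windowLen_strictMono (by rw [card_erase_of_mem hx₀D]; exact Nat.sub_lt hσ one_pos)
    refine fun x hx => (hg₁ x hx).2.trans_ssubset <|
      (ssubset_iff_of_subset (Ico_subset_Ico_right (by omega))).mpr
        ⟨a + windowLen #(D.erase x₀), ?_, ?_⟩ <;> simp [hlt]
  have hgD : ∀ x ∈ D, IsAlignedInterval w (Function.update g₁ x₀ I x) ∧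
      Function.update g₁ x₀ I x ⊆ I := by
    intro x hxD
    by_cases hxx₀ : x = x₀
    · subst hxx₀
      rw [Function.update_self]
      refine ⟨⟨a, windowLen σ, ?_, hx₀ ▸ ha, rfl⟩, subset_rfl⟩
      simpa [windowLen] using windowLen_strictMono hσ
    · have hx : x ∈ D.erase x₀ := mem_erase.mpr ⟨hxx₀, hxD⟩
      rw [Function.update_of_ne hxx₀]
      exact ⟨(hg₁ x hx).1, (hg₁I x hx).subset⟩
  refine ⟨D.piecewise (Function.update g₁ x₀ I) g₂, fun x hx => ?_, ?_⟩
  · by_cases hxD : x ∈ D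
    · rw [piecewise_eq_of_mem _ _ _ hxD]
      exact ⟨(hgD x hxD).1, (hgD x hxD).2.trans
        (Ico_subset_Ico_right (by
          rw [hcardF]
          exact Nat.add_le_add_left (windowLen_strictMono.monotone (by omega)) a))⟩
    · rw [piecewise_eq_of_notMem _ _ _ hxD]
      obtain ⟨hal, hsub⟩ := hg₂ x (mem_sdiff.mpr ⟨hx, hxD⟩)
      exact ⟨hal, hsub.trans (Ico_subset_Ico (by omega) hwidth)⟩
  · have hDF₂ : ∀ x ∈ D, ∀ y ∈ F₂, Disjoint (Function.update g₁ x₀ I x) (g₂ y) :=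
      fun x hx y hy =>
        ((Ico_disjoint_Ico_consecutive a (a + windowLen σ) (a' + windowLen #F₂)).mono
          (hgD x hx).2 ((hg₂ y hy).2.trans (Ico_subset_Ico_left ha'lo)))
    have hemb := (hg₁r.insert_top (refl x₀) (fun x hx => ?_) hg₁I).union hg₂r
      (by rw [insert_erase hx₀D]; exact fun x hx y hy =>
        hr.not_rel_of_mem_below_of_mem_sdiff hmax hx hy)
      (by rwa [insert_erase hx₀D])
      (by rw [insert_erase hx₀D]; exact fun x hx => (hgD x hx).1.nonempty)
      (fun y hy => (hg₂ y hy).1.nonempty)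
    · rwa [insert_erase hx₀D, union_sdiff_of_subset hDF] at hemb
    · obtain ⟨hxx₀, hxD⟩ := mem_erase.mp hx
      rw [mem_below] at hxD
      exact ⟨hxD, fun h => hxx₀ (antisymm hxD h)⟩

theorem _root_.IsTreeOrderRel.exists_embedding_alignedIntervals {P : Type*} [Fintype P]
    {r : P → P → Prop} (hr : IsTreeOrderRel P r) {n w : ℕ} (hn : Fintype.card P ≤ n)
    (hw : 2 * Nat.log 2 n + 1 < 2 ^ w) :
    ∃ g : P → Finset ℕ, (∀ x, g x ∈ alignedIntervals w (windowLen n)) ∧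
      ∀ x y, r x y ↔ g x ⊆ g y := by
  classical
  have hwP : 2 * Nat.log 2 (Fintype.card P) + 1 < 2 ^ w :=
    lt_of_le_of_lt (by have := Nat.log_mono_right (b := 2) hn; omega) hw
  obtain ⟨g, hg, hgr⟩ :=
    hr.exists_alignedPacking hwP univ (fun _ _ _ _ => mem_univ _) 0 (dvd_zero _)
  refine ⟨g, fun x => (hg x (mem_univ x)).1.mem_alignedIntervals ?_,
    fun x y => hgr x (mem_univ x) y (mem_univ y)⟩
  rw [range_eq_Ico]
  exact (hg x (mem_univ x)).2.trans
    (Ico_subset_Ico_right (by simpa using windowLen_strictMono.monotone hn))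

lemma card_alignedIntervals_windowLen_le {n : ℕ} (hn : 4 ≤ n) :
    #(alignedIntervals (Nat.log 2 (2 * Nat.log 2 n + 1) + 1) (windowLen n))
      ≤ 62 * n * Nat.log 2 n ^ 3 := by
  set b := Nat.log 2 n
  have hb : 2 ≤ b := Nat.le_log_of_pow_le one_lt_two (by omega)
  have hL : windowLen n < 2 ^ (3 * b + 2) := by
    have h₁ : n < 2 ^ (b + 1) := Nat.lt_pow_succ_log_self one_lt_two n
    have h₂ : 2 * b + 1 < 2 ^ (2 * b + 1) := Nat.lt_two_pow_self
    calc windowLen n < 2 ^ (b + 1) * 2 ^ (2 * b + 1) := Nat.mul_lt_mul'' h₁ h₂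
      _ = 2 ^ (3 * b + 2) := by rw [← pow_add]; ring_nf
  have hw : 2 ^ (Nat.log 2 (2 * b + 1) + 1) ≤ 5 * b := by
    have := Nat.pow_log_le_self 2 (x := 2 * b + 1) (by omega)
    rw [pow_succ]
    omega
  refine (card_alignedIntervals_le hL _).trans ?_
  calc 2 * windowLen n + 1 + (3 * b + 2) * (windowLen n * 2 ^ (Nat.log 2 (2 * b + 1) + 1))
      ≤ 2 * (n * (3 * b)) + 1 + 4 * b * (n * (3 * b) * (5 * b)) := by
        unfold windowLen
        gcongr <;> omega
    _ ≤ 62 * n * b ^ 3 := by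
        have hb3 : 4 * (n * b) ≤ n * b ^ 3 :=
          calc 4 * (n * b) ≤ b ^ 2 * (n * b) := Nat.mul_le_mul_right _ (by nlinarith)
            _ = n * b ^ 3 := by ring
        have hnb : 1 ≤ n * b := Nat.one_le_iff_ne_zero.mpr (by positivity)
        nlinarith

end UniversalPoset

/-- For every `k ≥ 1` there is a universal poset of size
`(C · n · (log₂ n)³ · (log₂ log₂ n)^C)^k = O(n^k log^{3k+o(k)} n)` for the
family of posets with at most `n` elements and tree-dimension at most `k`. -/
theorem small_universal_poset_tree_dim :
    ∃ C : ℕ, ∀ k n : ℕ, 1 ≤ k → 4 ≤ n →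
      ∃ (N : ℕ) (r : Fin N → Fin N → Prop),
        N ≤ (C * n * (Nat.log 2 n) ^ 3 * (Nat.log 2 (Nat.log 2 n)) ^ C) ^ k ∧
        IsPartialOrder (Fin N) r ∧
        ∀ (P : Type) [Fintype P] [PartialOrder P],
          Fintype.card P ≤ n → TreeDimLE P k →
          ∃ f : P → Fin N,
            Function.Injective f ∧ ∀ a b : P, a ≤ b ↔ r (f a) (f b) := by
  refine ⟨62, fun k n _ hn => ?_⟩
  set S := UniversalPoset.alignedIntervals (Nat.log 2 (2 * Nat.log 2 n + 1) + 1)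
    (UniversalPoset.windowLen n)
  let e := Fintype.equivFin (Fin k → S)
  refine ⟨_, fun i j => e.symm i ≤ e.symm j, ?_,
    (RelEmbedding.preimage e.symm.toEmbedding _).isPartialOrder, ?_⟩
  · have hloglog : 1 ≤ Nat.log 2 (Nat.log 2 n) ^ 62 :=
      Nat.one_le_pow _ _ (Nat.log_pos one_lt_two (Nat.le_log_of_pow_le one_lt_two (by omega)))
    rw [Fintype.card_fun, Fintype.card_coe, Fintype.card_fin]
    exact Nat.pow_le_pow_left ((UniversalPoset.card_alignedIntervals_windowLen_le hn).trans
      (Nat.le_mul_of_pos_right _ hloglog)) k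
  · rintro P _ _ hcard ⟨rs, hrs, hiff⟩
    choose g hgS hg using fun i => (hrs i).exists_embedding_alignedIntervals hcard
      (Nat.lt_pow_succ_log_self one_lt_two _)
    let f : P ↪o (Fin k → S) := OrderEmbedding.ofMapLEIff (fun x i => ⟨g i x, hgS i x⟩)
      fun x y => by simp [hiff, hg, Pi.le_def]
    exact ⟨e ∘ f, e.injective.comp f.injective, fun a b => by simp⟩
end

section
/- For every finite tree order (X, ≤) with n elements there exists an injective map assigning to each x ∈ X a pair of natural numbers (a_x, b_x) with 1 ≤ a_x ≤ b_x ≤ n such that for all u, v ∈ X: u ≤ v if and only if a_v ≤ a_u and b_u ≤ b_v (i.e., the interval [a_u, b_u] is contained in [a_v, b_v]). In particular, ancestry in n-node rooted forests can be encoded by interval containment with all interval endpoints in [1, n]. -/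
namespace NonemptyInterval

variable {α : Type*}

section Shift

variable [AddCommMonoid α] [PartialOrder α] [IsOrderedCancelAddMonoid α]

def shift (k : α) : NonemptyInterval α ↪o NonemptyInterval α :=
  OrderEmbedding.ofMapLEIff (fun s => ⟨(s.fst + k, s.snd + k), add_le_add_left s.fst_le_snd k⟩)
    (fun s t => by simp [le_def])

@[simp] theorem fst_shift (k : α) (s : NonemptyInterval α) : (shift k s).fst = s.fst + k := rfl

@[simp] theorem snd_shift (k : α) (s : NonemptyInterval α) : (shift k s).snd = s.snd + k := rfl

end Shift

variable [Preorder α] {s t : NonemptyInterval α}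

theorem not_le_of_snd_lt_fst (h : s.snd < t.fst) : ¬ s ≤ t := fun hst =>
  (h.trans_le ((le_def.1 hst).1.trans s.fst_le_snd)).false

theorem not_ge_of_snd_lt_fst (h : s.snd < t.fst) : ¬ t ≤ s := fun hts =>
  (h.trans_le (t.fst_le_snd.trans (le_def.1 hts).2)).false

end NonemptyInterval

open NonemptyInterval

-- `NonemptyInterval ℕ` is ordered by inclusion.
def HasIntervalLabeling (X : Type*) [Preorder X] (n : ℕ) : Prop :=
  ∃ f : X ↪o NonemptyInterval ℕ, ∀ x, 1 ≤ (f x).fst ∧ (f x).snd ≤ n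

namespace HasIntervalLabeling

variable {X : Type*} [PartialOrder X]

theorem of_isEmpty [IsEmpty X] (n : ℕ) : HasIntervalLabeling X n :=
  ⟨.ofIsEmpty, isEmptyElim⟩

theorem of_isTop {t : X} (ht : IsTop t) {n : ℕ} (h : HasIntervalLabeling ↥({t}ᶜ : Set X) n) :
    HasIntervalLabeling X (n + 1) := by
  classical
  obtain ⟨g, hg⟩ := h
  let f : X → NonemptyInterval ℕ := fun x =>
    if hx : x = t then ⟨(1, n + 1), by omega⟩ else shift 1 (g ⟨x, hx⟩)
  have hf : ∀ x y, f x ≤ f y ↔ x ≤ y := by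
    intro x y
    by_cases hx : x = t <;> by_cases hy : y = t
    · simp [hx, hy]
    · have := hg ⟨y, hy⟩
      subst hx
      refine iff_of_false (fun h => ?_) fun h => hy ((ht y).antisymm h)
      simp [f, hy, le_def] at h
      omega
    · have := hg ⟨x, hx⟩
      subst hy
      refine iff_of_true ?_ (ht x)
      simp [f, hx, le_def]
      omega
    · simp only [f, hx, hy, dite_false, (shift 1).le_iff_le, g.le_iff_le]
      rfl
  refine ⟨.ofMapLEIff f hf, fun x => show 1 ≤ (f x).fst ∧ (f x).snd ≤ n + 1 from ?_⟩
  by_cases hx : x = t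
  · simp [f, hx]
  · have := hg ⟨x, hx⟩
    simp [f, hx]
    omega

theorem of_isLowerSet_of_isUpperSet {s : Set X} (hl : IsLowerSet s) (hu : IsUpperSet s)
    {k l : ℕ} (hs : HasIntervalLabeling s k) (hsc : HasIntervalLabeling ↥sᶜ l) :
    HasIntervalLabeling X (k + l) := by
  classical
  obtain ⟨F, hF⟩ := hs
  obtain ⟨G, hG⟩ := hsc
  let f : X → NonemptyInterval ℕ := fun x =>
    if hx : x ∈ s then F ⟨x, hx⟩ else shift k (G ⟨x, hx⟩)
  have separated : ∀ x y (hx : x ∈ s) (hy : y ∉ s), (f x).snd < (f y).fst := by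
    intro x y hx hy
    have := hF ⟨x, hx⟩
    have := hG ⟨y, hy⟩
    simp only [f, hx, hy, dite_true, dite_false, fst_shift]
    omega
  have hf : ∀ x y, f x ≤ f y ↔ x ≤ y := by
    intro x y
    by_cases hx : x ∈ s <;> by_cases hy : y ∈ s
    · simp [f, hx, hy]
    · exact iff_of_false (not_le_of_snd_lt_fst (separated x y hx hy)) fun h => hy (hu h hx)
    · exact iff_of_false (not_ge_of_snd_lt_fst (separated y x hy hx)) fun h => hx (hl h hy)
    · simp [f, hx, hy, Subtype.mk_le_mk]
  refine ⟨.ofMapLEIff f hf, fun x => show 1 ≤ (f x).fst ∧ (f x).snd ≤ k + l from ?_⟩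
  by_cases hx : x ∈ s
  · have := hF ⟨x, hx⟩
    simp only [f, hx, dite_true]
    omega
  · have := hG ⟨x, hx⟩
    simp only [f, hx, dite_false, fst_shift, snd_shift]
    omega

end HasIntervalLabeling

namespace IsTreeOrder

variable {X : Type*} [PartialOrder X]

theorem subtype (h : IsTreeOrder X) (p : X → Prop) : IsTreeOrder (Subtype p) :=
  fun x y z hxy hxz => h x y z hxy hxz

theorem isUpperSet_Iic (h : IsTreeOrder X) {m : X} (hm : IsMax m) : IsUpperSet (Set.Iic m) :=
  fun x y hxy (hx : x ≤ m) => (h x y m hxy hx).elim id (@hm y)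

theorem hasIntervalLabeling [Finite X] (h : IsTreeOrder X) : HasIntervalLabeling X (Nat.card X) := by
  induction hn : Nat.card X using Nat.strong_induction_on generalizing X with
  | _ n ih =>
  rcases isEmpty_or_nonempty X with hX | hX
  · exact .of_isEmpty n
  obtain ⟨m, hm⟩ : ∃ m : X, IsMax m := by
    obtain ⟨m, hm⟩ := Set.finite_univ.exists_maximal (α := X) Set.univ_nonempty
    exact ⟨m, fun y hy => hm.2 trivial hy⟩
  set s := Set.Iic m
  let top : s := ⟨m, le_rfl⟩
  have card_split : s.ncard + sᶜ.ncard = n := hn ▸ Set.ncard_add_ncard_compl s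
  have card_Iic_split : 1 + ({top}ᶜ : Set s).ncard = s.ncard := by
    simpa using Set.ncard_add_ncard_compl ({top} : Set s)
  have hsc : HasIntervalLabeling ↥sᶜ sᶜ.ncard :=
    ih _ (by omega) (h.subtype _) rfl
  have hs : HasIntervalLabeling s s.ncard := by
    rw [← card_Iic_split, add_comm]
    refine .of_isTop (t := top) (fun x => x.2) (ih _ ?_ ((h.subtype _).subtype _) rfl)
    omega
  rw [← card_split]
  exact .of_isLowerSet_of_isUpperSet (isLowerSet_Iic m) (h.isUpperSet_Iic hm) hs hsc

end IsTreeOrder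

/-- The classical DFS-interval ancestry-labeling scheme: every finite tree
order with `n` elements can be labeled by intervals `[a_x, b_x]` with
endpoints in `[1, n]`, with ancestry equivalent to interval containment. -/
theorem dfs_interval_scheme (X : Type) [Fintype X] [PartialOrder X]
    (h : IsTreeOrder X) :
    ∃ a b : X → ℕ,
      (∀ x : X, 1 ≤ a x ∧ a x ≤ b x ∧ b x ≤ Fintype.card X) ∧
      Function.Injective (fun x => (a x, b x)) ∧
      (∀ u v : X, u ≤ v ↔ (a v ≤ a u ∧ b u ≤ b v)) := by
  obtain ⟨f, hf⟩ := h.hasIntervalLabeling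
  rw [Nat.card_eq_fintype_card] at hf
  refine ⟨fun x => (f x).fst, fun x => (f x).snd, fun x => ⟨(hf x).1, (f x).fst_le_snd, (hf x).2⟩,
    fun x y hxy => f.injective (NonemptyInterval.ext hxy), fun u v => ?_⟩
  rw [← f.le_iff_le, NonemptyInterval.le_def]
end
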